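/- Let λ₀ = 1 and λⱼ = 2^{-2^j} for j ≥ 1. Then τ := sup_{j ≥ 1} (Σ_{m > j} (1-λₘ)λ₀···λ_{m-1}) / ((1-λⱼ)λ₀···λ_{j-1}) < 1/2. -/
import Mathlib


open scoped Classical

/-- `λ₀ = 1`, `λⱼ = 2^{-2^j}` for `j ≥ 1`. -/
noncomputable def lamSeq (j : ℕ) : ℝ := if j = 0 then 1 else ((2 : ℝ) ^ (2 ^ j))⁻¹

/-- `λ₀ λ₁ ⋯ λ_{m-1}`. -/
noncomputable def lamProd (m : ℕ) : ℝ := ∏ i ∈ Finset.range m, lamSeq i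

lemma lamSeq_pos (j : ℕ) : 0 < lamSeq j := by
  unfold lamSeq; split <;> positivity

lemma lamSeq_le_one (j : ℕ) : lamSeq j ≤ 1 := by
  unfold lamSeq; split
  · exact le_refl 1
  · rw [inv_le_one_iff₀]
    right
    calc (1:ℝ) = 2 ^ 0 := by norm_num
    _ ≤ 2 ^ 2 ^ j := by
      apply pow_le_pow_right₀ one_le_two (Nat.zero_le _)

lemma lamSeq_le_quarter {j : ℕ} (hj : 1 ≤ j) : lamSeq j ≤ 1/4 := by
  have hj0 : j ≠ 0 := Nat.one_le_iff_ne_zero.mp hj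
  unfold lamSeq
  rw [if_neg hj0]
  have h2 : (2:ℝ) ^ (2:ℕ) ≤ 2 ^ 2 ^ j :=
    pow_le_pow_right₀ one_le_two (Nat.le_self_pow hj0 2)
  calc ((2:ℝ) ^ 2 ^ j)⁻¹ ≤ ((2:ℝ) ^ (2:ℕ))⁻¹ := by
        rw [inv_le_inv₀ (by positivity) (by positivity)]; exact h2
  _ = 1/4 := by norm_num

lemma lamProd_pos (m : ℕ) : 0 < lamProd m :=
  Finset.prod_pos fun i _ => lamSeq_pos i

lemma lamProd_succ (m : ℕ) : lamProd (m+1) = lamProd m * lamSeq m :=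
  Finset.prod_range_succ _ _

lemma lamProd_le (m : ℕ) : lamProd m ≤ 2 * (2⁻¹:ℝ)^m := by
  induction m with
  | zero => simp [lamProd]
  | succ n ih =>
    rw [lamProd_succ]
    rcases Nat.eq_zero_or_pos n with h | h
    · subst h
      simp [lamProd, lamSeq]
    · have hn : n ≠ 0 := Nat.pos_iff_ne_zero.mp h
      have hs : lamSeq n ≤ 2⁻¹ := by
        unfold lamSeq
        rw [if_neg hn, inv_le_inv₀ (by positivity) (by norm_num)]
        calc (2:ℝ) = 2 ^ (1:ℕ) := by norm_num
        _ ≤ 2 ^ 2 ^ n := pow_le_pow_right₀ one_le_two (Nat.one_le_two_pow)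
      calc lamProd n * lamSeq n ≤ (2 * (2⁻¹:ℝ)^n) * 2⁻¹ := by
            apply mul_le_mul ih hs (lamSeq_pos n).le (by positivity)
      _ = 2 * (2⁻¹:ℝ)^(n+1) := by ring

lemma lamProd_tendsto : Filter.Tendsto lamProd Filter.atTop (nhds 0) := by
  apply squeeze_zero (fun n => (lamProd_pos n).le) lamProd_le
  have h := tendsto_pow_atTop_nhds_zero_of_lt_one (by norm_num : (0:ℝ) ≤ 2⁻¹) (by norm_num)
  have := h.const_mul (2:ℝ)
  simpa using this

lemma term_eq (m : ℕ) : (1 - lamSeq m) * lamProd m = lamProd m - lamProd (m+1) := by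
  rw [lamProd_succ]; ring

lemma partial_sum (j N : ℕ) :
    ∑ m ∈ Finset.range N, (if j < m then (1 - lamSeq m) * lamProd m else 0)
      = lamProd (j+1) - lamProd (max (j+1) N) := by
  induction N with
  | zero => simp
  | succ n ih =>
    rw [Finset.sum_range_succ, ih]
    by_cases h : j < n
    · have h1 : j + 1 ≤ n := h
      rw [if_pos h, term_eq, max_eq_right h1, max_eq_right (h1.trans (Nat.le_succ n))]
      ring
    · have h1 : n ≤ j := Nat.le_of_not_lt h
      rw [if_neg h, max_eq_left (Nat.succ_le_succ h1), max_eq_left (Nat.le_succ_of_le h1)]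
      ring

lemma hasSum_tail (j : ℕ) :
    HasSum (fun m : ℕ => if j < m then (1 - lamSeq m) * lamProd m else 0) (lamProd (j+1)) := by
  have hnn : ∀ m : ℕ, 0 ≤ (if j < m then (1 - lamSeq m) * lamProd m else 0) := by
    intro m
    split
    · exact mul_nonneg (by linarith [lamSeq_le_one m]) (lamProd_pos m).le
    · exact le_refl 0
  rw [hasSum_iff_tendsto_nat_of_nonneg hnn]
  have hmax : Filter.Tendsto (fun N => max (j+1) N) Filter.atTop Filter.atTop :=
    Filter.tendsto_atTop_mono (fun N => le_max_right (j+1) N) Filter.tendsto_id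
  have h2 : Filter.Tendsto (fun N => lamProd (j+1) - lamProd (max (j+1) N))
      Filter.atTop (nhds (lamProd (j+1) - 0)) :=
    Filter.Tendsto.sub tendsto_const_nhds (lamProd_tendsto.comp hmax)
  simp only [sub_zero] at h2
  convert h2 using 1
  funext N
  exact partial_sum j N

/-- The supremum of the ratios `(Σ_{m>j} (1-λₘ)λ₀⋯λ_{m-1}) / ((1-λⱼ)λ₀⋯λ_{j-1})`
over `j ≥ 1` is strictly smaller than `1/2`. -/
theorem tau_lt_half :
    ∃ τ : ℝ, τ < 1 / 2 ∧ ∀ j : ℕ, 1 ≤ j →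
      (∑' m : ℕ, if j < m then (1 - lamSeq m) * lamProd m else 0) /
        ((1 - lamSeq j) * lamProd j) ≤ τ := by
  refine ⟨1/3, by norm_num, fun j hj => ?_⟩
  rw [(hasSum_tail j).tsum_eq, lamProd_succ]
  have hq := lamSeq_le_quarter hj
  have h1 : (0:ℝ) < 1 - lamSeq j := by linarith
  have hp := lamProd_pos j
  rw [show lamProd j * lamSeq j / ((1 - lamSeq j) * lamProd j)
      = lamSeq j / (1 - lamSeq j) by field_simp]
  rw [div_le_iff₀ h1]
  linarith [lamSeq_pos j]
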